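/- Let u, h, ρ be smooth fields on ℝ × ℝ³ with ρ > 0 everywhere, and set ω = ∇×u. Assume the barotropic Crocco momentum equation ∂u/∂t − u×ω + ∇(h + |u|²/2) = 0 and the mass continuity equation ∂ρ/∂t + ∇·(ρu) = 0. Then (∂/∂t + u·∇)( (u·ω)/ρ ) = −(ω/ρ)·∇( h − |u|²/2 ). -/

import Mathlib

noncomputable section

/-- Vectors in ℝ³. -/
abbrev Vec3 : Type := Fin 3 → ℝ

/-- Points of space-time: `(t, x)` with `t : ℝ`, `x : Fin 3 → ℝ`. -/
abbrev Pt : Type := ℝ × Vec3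

/-- Euclidean dot product on ℝ³. -/
def dot3 (a b : Vec3) : ℝ := ∑ i, a i * b i

/-- Cross product on ℝ³. -/
def cross3 (a b : Vec3) : Vec3 :=
  ![a 1 * b 2 - a 2 * b 1, a 2 * b 0 - a 0 * b 2, a 0 * b 1 - a 1 * b 0]

/-- Spatial partial derivative ∂f/∂xᵢ of a scalar field. -/
def pd (i : Fin 3) (f : Pt → ℝ) (p : Pt) : ℝ :=
  fderiv ℝ (fun x => f (p.1, x)) p.2 (Pi.single i 1)

/-- Time derivative ∂f/∂t of a scalar field. -/
def dt (f : Pt → ℝ) (p : Pt) : ℝ := deriv (fun s => f (s, p.2)) p.1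

/-- Time derivative of a vector field, componentwise. -/
def dtVec (F : Pt → Vec3) (p : Pt) : Vec3 := fun i => dt (fun q => F q i) p

/-- Spatial gradient ∇f of a scalar field. -/
def grad3 (f : Pt → ℝ) (p : Pt) : Vec3 := fun i => pd i f p

/-- Spatial divergence ∇·F of a vector field. -/
def div3 (F : Pt → Vec3) (p : Pt) : ℝ := ∑ i, pd i (fun q => F q i) p

/-- Spatial curl ∇×F of a vector field. -/
def curl3 (F : Pt → Vec3) (p : Pt) : Vec3 :=
  ![pd 1 (fun q => F q 2) p - pd 2 (fun q => F q 1) p,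
    pd 2 (fun q => F q 0) p - pd 0 (fun q => F q 2) p,
    pd 0 (fun q => F q 1) p - pd 1 (fun q => F q 0) p]

/-- Directional derivative (u·∇)f of a scalar field. -/
def dirD (u : Pt → Vec3) (f : Pt → ℝ) (p : Pt) : ℝ := ∑ i, u p i * pd i f p

/-- Directional derivative (u·∇)F of a vector field. -/
def dirDVec (u F : Pt → Vec3) (p : Pt) : Vec3 :=
  fun j => ∑ i, u p i * pd i (fun q => F q j) p

/-- (∇u)ᵀ·A, the vector with i-th component ∑ⱼ (∂uʲ/∂xⁱ) Aⱼ. -/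
def gradTdot (u A : Pt → Vec3) (p : Pt) : Vec3 :=
  fun i => ∑ j, pd i (fun q => u q j) p * A p j

/-- A field is smooth when it is C^∞ jointly in time and space. -/
def SmoothS (f : Pt → ℝ) : Prop := ContDiff ℝ (⊤ : ℕ∞) f

/-- A vector field is smooth when it is C^∞ jointly in time and space. -/
def SmoothV (F : Pt → Vec3) : Prop := ContDiff ℝ (⊤ : ℕ∞) F

/-!
Along particle paths the Crocco equation becomes `Du/Dt = -∇h`, because Lamb's identity
`(u·∇)u = ∇(|u|²/2) - u × ω` cancels the Lamb vector. Taking its curl gives the vorticity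
equation `Dω/Dt = (ω·∇)u - (∇·u) ω`, and continuity gives `Dρ/Dt = -ρ (∇·u)`. Hence
`D(u·ω)/Dt = -ω·∇h + u·(ω·∇)u - (∇·u)(u·ω)` with `u·(ω·∇)u = ω·∇(|u|²/2)`, and in the quotient
rule for `(u·ω)/ρ` the two dilatation terms `(∇·u)(u·ω)/ρ` cancel.
-/

open scoped ContDiff

-- `fun_prop` does not chain `ContDiff.differentiable` with `Differentiable.differentiableAt`.
@[fun_prop]
theorem ContDiff.differentiableAt_of_smooth {E F : Type*} [NormedAddCommGroup E] [NormedSpace ℝ E]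
    [NormedAddCommGroup F] [NormedSpace ℝ F] {f : E → F} {x : E} (hf : ContDiff ℝ ∞ f) :
    DifferentiableAt ℝ f x :=
  hf.differentiable (by simp) x

section PartialDerivatives

variable {f g : Pt → ℝ} {p : Pt}

theorem pd_eq_fderiv (hf : DifferentiableAt ℝ f p) (i : Fin 3) :
    pd i f p = fderiv ℝ f p (0, Pi.single i 1) := by
  have hslice : HasFDerivAt (fun x : Vec3 => f (p.1, x))
      ((fderiv ℝ f p).comp (ContinuousLinearMap.inr ℝ ℝ Vec3)) p.2 :=
    hf.hasFDerivAt.comp p.2 (hasFDerivAt_prodMk_right p.1 p.2)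
  rw [pd, hslice.fderiv]
  rfl

theorem dt_eq_fderiv (hf : DifferentiableAt ℝ f p) : dt f p = fderiv ℝ f p (1, 0) := by
  have hslice : HasFDerivAt (fun s : ℝ => f (s, p.2))
      ((fderiv ℝ f p).comp (ContinuousLinearMap.inl ℝ ℝ Vec3)) p.1 :=
    hf.hasFDerivAt.comp p.1 (hasFDerivAt_prodMk_left p.1 p.2)
  rw [dt, hslice.hasDerivAt.deriv]
  rfl

theorem pd_add (hf : DifferentiableAt ℝ f p) (hg : DifferentiableAt ℝ g p) (i : Fin 3) :
    pd i (fun q => f q + g q) p = pd i f p + pd i g p := by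
  rw [pd_eq_fderiv (f := fun q => f q + g q) (hf.add hg), pd_eq_fderiv hf, pd_eq_fderiv hg,
    fderiv_fun_add hf hg, add_apply]

theorem pd_sub (hf : DifferentiableAt ℝ f p) (hg : DifferentiableAt ℝ g p) (i : Fin 3) :
    pd i (fun q => f q - g q) p = pd i f p - pd i g p := by
  rw [pd_eq_fderiv (f := fun q => f q - g q) (hf.sub hg), pd_eq_fderiv hf, pd_eq_fderiv hg,
    fderiv_fun_sub hf hg, sub_apply]

theorem pd_mul (hf : DifferentiableAt ℝ f p) (hg : DifferentiableAt ℝ g p) (i : Fin 3) :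
    pd i (fun q => f q * g q) p = pd i f p * g p + f p * pd i g p := by
  rw [pd_eq_fderiv (f := fun q => f q * g q) (hf.mul hg), pd_eq_fderiv hf, pd_eq_fderiv hg,
    fderiv_fun_mul hf hg]
  simp only [add_apply, smul_apply, smul_eq_mul]
  ring

theorem pd_div_const (hf : DifferentiableAt ℝ f p) (c : ℝ) (i : Fin 3) :
    pd i (fun q => f q / c) p = pd i f p / c := by
  simp only [div_eq_mul_inv]
  rw [pd_eq_fderiv (f := fun q => f q * c⁻¹) (hf.mul_const _), pd_eq_fderiv hf,
    fderiv_mul_const hf, smul_apply, smul_eq_mul, mul_comm]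

theorem dt_sub (hf : DifferentiableAt ℝ f p) (hg : DifferentiableAt ℝ g p) :
    dt (fun q => f q - g q) p = dt f p - dt g p := by
  rw [dt_eq_fderiv (f := fun q => f q - g q) (hf.sub hg), dt_eq_fderiv hf, dt_eq_fderiv hg,
    fderiv_fun_sub hf hg, sub_apply]

theorem grad3_add (hf : DifferentiableAt ℝ f p) (hg : DifferentiableAt ℝ g p) :
    grad3 (fun q => f q + g q) p = grad3 f p + grad3 g p :=
  funext (pd_add hf hg)

theorem grad3_sub (hf : DifferentiableAt ℝ f p) (hg : DifferentiableAt ℝ g p) :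
    grad3 (fun q => f q - g q) p = grad3 f p - grad3 g p :=
  funext (pd_sub hf hg)

theorem pd_eq_fderiv_fun (hf : Differentiable ℝ f) (i : Fin 3) :
    pd i f = fun q => fderiv ℝ f q (0, Pi.single i 1) :=
  funext fun q => pd_eq_fderiv (hf q) i

theorem dt_eq_fderiv_fun (hf : Differentiable ℝ f) : dt f = fun q => fderiv ℝ f q (1, 0) :=
  funext fun q => dt_eq_fderiv (hf q)

theorem pd_const (c : ℝ) (i : Fin 3) : pd i (fun _ => c) p = 0 := by
  simp [pd]

end PartialDerivatives

section SecondDerivatives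

variable {f : Pt → ℝ} {p : Pt}

theorem contDiff_fderiv_apply (hf : ContDiff ℝ ∞ f) (v : Pt) :
    ContDiff ℝ ∞ (fun q => fderiv ℝ f q v) :=
  (hf.fderiv_right (m := ∞) (by simp)).clm_apply contDiff_const

@[fun_prop]
theorem contDiff_pd (hf : ContDiff ℝ ∞ f) (i : Fin 3) : ContDiff ℝ ∞ (pd i f) := by
  rw [pd_eq_fderiv_fun (hf.differentiable (by simp))]
  exact contDiff_fderiv_apply hf _

@[fun_prop]
theorem contDiff_dt (hf : ContDiff ℝ ∞ f) : ContDiff ℝ ∞ (dt f) := by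
  rw [dt_eq_fderiv_fun (hf.differentiable (by simp))]
  exact contDiff_fderiv_apply hf _

theorem fderiv_fderiv_apply_comm (hf : ContDiff ℝ ∞ f) (v w : Pt) :
    fderiv ℝ (fun q => fderiv ℝ f q w) p v = fderiv ℝ (fun q => fderiv ℝ f q v) p w := by
  have hf' : DifferentiableAt ℝ (fderiv ℝ f) p :=
    (hf.fderiv_right (m := ∞) (by simp)).differentiableAt_of_smooth
  rw [fderiv_clm_apply hf' (differentiableAt_const _),
    fderiv_clm_apply hf' (differentiableAt_const _)]
  simpa using hf.contDiffAt.isSymmSndFDerivAt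
    (by simp only [minSmoothness_of_isRCLikeNormedField]; exact ENat.LEInfty.out) v w

theorem pd_pd_comm (hf : ContDiff ℝ ∞ f) (i j : Fin 3) :
    pd i (pd j f) p = pd j (pd i f) p := by
  have hd := hf.differentiable (by simp)
  rw [pd_eq_fderiv (by fun_prop), pd_eq_fderiv (by fun_prop), pd_eq_fderiv_fun hd,
    pd_eq_fderiv_fun hd, fderiv_fderiv_apply_comm hf]

theorem dt_pd_comm (hf : ContDiff ℝ ∞ f) (i : Fin 3) :
    dt (pd i f) p = pd i (dt f) p := by
  have hd := hf.differentiable (by simp)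
  rw [dt_eq_fderiv (by fun_prop), pd_eq_fderiv (by fun_prop), pd_eq_fderiv_fun hd,
    dt_eq_fderiv_fun hd, fderiv_fderiv_apply_comm hf]

end SecondDerivatives

def materialDeriv (u : Pt → Vec3) (f : Pt → ℝ) (p : Pt) : ℝ := dt f p + dirD u f p

def materialDerivVec (u F : Pt → Vec3) (p : Pt) : Vec3 := dtVec F p + dirDVec u F p

section MaterialDerivative

variable {u : Pt → Vec3} {f g : Pt → ℝ} {p : Pt}

theorem materialDeriv_eq_fderiv (hf : DifferentiableAt ℝ f p) :
    materialDeriv u f p = fderiv ℝ f p (1, u p) := by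
  have hdir : ((1 : ℝ), u p) = (1, 0) + ∑ i, u p i • ((0 : ℝ), (Pi.single i 1 : Vec3)) := by
    ext j <;> simp [Prod.fst_sum, Prod.snd_sum, Finset.sum_apply, Pi.single_apply]
  simp only [materialDeriv, dirD, dt_eq_fderiv hf, pd_eq_fderiv hf, hdir, map_add, map_sum,
    map_smul, smul_eq_mul]

theorem materialDerivVec_apply (F : Pt → Vec3) (i : Fin 3) :
    materialDerivVec u F p i = materialDeriv u (fun q => F q i) p := rfl

theorem materialDeriv_div (hf : DifferentiableAt ℝ f p) (hg : DifferentiableAt ℝ g p)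
    (hgp : g p ≠ 0) :
    materialDeriv u (fun q => f q / g q) p
      = (materialDeriv u f p * g p - f p * materialDeriv u g p) / g p ^ 2 := by
  have hinv : HasFDerivAt (fun q => (g q)⁻¹) ((-(g p ^ 2)⁻¹) • fderiv ℝ g p) p :=
    (hasDerivAt_inv hgp).comp_hasFDerivAt p hg.hasFDerivAt
  have hquot : HasFDerivAt (fun q => f q / g q)
      (f p • ((-(g p ^ 2)⁻¹) • fderiv ℝ g p) + (g p)⁻¹ • fderiv ℝ f p) p := by
    simpa only [div_eq_mul_inv] using hf.hasFDerivAt.fun_mul hinv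
  rw [materialDeriv_eq_fderiv hquot.differentiableAt, materialDeriv_eq_fderiv hf,
    materialDeriv_eq_fderiv hg, hquot.fderiv]
  simp only [add_apply, smul_apply, smul_eq_mul]
  field_simp
  ring

theorem materialDeriv_dot3 {F G : Pt → Vec3} (hF : DifferentiableAt ℝ F p)
    (hG : DifferentiableAt ℝ G p) :
    materialDeriv u (fun q => dot3 (F q) (G q)) p
      = dot3 (materialDerivVec u F p) (G p) + dot3 (F p) (materialDerivVec u G p) := by
  have hFi (i : Fin 3) : DifferentiableAt ℝ (fun q => F q i) p := by fun_prop
  have hGi (i : Fin 3) : DifferentiableAt ℝ (fun q => G q i) p := by fun_prop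
  simp only [dot3, materialDerivVec_apply, materialDeriv_eq_fderiv (hFi _),
    materialDeriv_eq_fderiv (hGi _)]
  rw [materialDeriv_eq_fderiv (by fun_prop), fderiv_fun_sum (fun i _ => by fun_prop),
    sum_apply, ← Finset.sum_add_distrib]
  refine Finset.sum_congr rfl fun i _ => ?_
  rw [fderiv_fun_mul (hFi i) (hGi i)]
  simp only [add_apply, smul_apply, smul_eq_mul]
  ring

end MaterialDerivative

theorem dot3_eq_dotProduct (a b : Vec3) : dot3 a b = a ⬝ᵥ b := rfl

theorem dirD_eq_dot3_grad3 (u : Pt → Vec3) (f : Pt → ℝ) (p : Pt) :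
    dirD u f p = dot3 (u p) (grad3 f p) := rfl

theorem vec3_ext {a b : Vec3} (h₀ : a 0 = b 0) (h₁ : a 1 = b 1) (h₂ : a 2 = b 2) : a = b := by
  ext j
  fin_cases j <;> assumption

section Smoothness

variable {u F : Pt → Vec3} {f : Pt → ℝ}

@[fun_prop]
theorem contDiff_grad3 (hf : ContDiff ℝ ∞ f) : ContDiff ℝ ∞ (grad3 f) :=
  contDiff_pi.2 fun i => contDiff_pd hf i

@[fun_prop]
theorem contDiff_dtVec (hF : ContDiff ℝ ∞ F) : ContDiff ℝ ∞ (dtVec F) :=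
  contDiff_pi.2 fun i => contDiff_dt (by fun_prop)

@[fun_prop]
theorem contDiff_dirDVec (hu : ContDiff ℝ ∞ u) (hF : ContDiff ℝ ∞ F) :
    ContDiff ℝ ∞ (dirDVec u F) :=
  contDiff_pi.2 fun j => by unfold dirDVec; fun_prop

@[fun_prop]
theorem contDiff_curl3 (hF : ContDiff ℝ ∞ F) : ContDiff ℝ ∞ (curl3 F) := by
  refine contDiff_pi.2 fun i => ?_
  fin_cases i <;>
    simp only [curl3, Fin.zero_eta, Fin.mk_one, Fin.reduceFinMk, Matrix.cons_val_zero,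
      Matrix.cons_val_one, Matrix.cons_val] <;>
    fun_prop

end Smoothness

section VectorCalculus

variable {u : Pt → Vec3} {p : Pt}

theorem pd_dot3_self_half (hu : DifferentiableAt ℝ u p) (i : Fin 3) :
    pd i (fun q => dot3 (u q) (u q) / 2) p = ∑ j, u p j * pd i (fun q => u q j) p := by
  have hui (j : Fin 3) : DifferentiableAt ℝ (fun q => u q j) p := by fun_prop
  rw [pd_div_const (by unfold dot3; fun_prop)]
  simp only [dot3, Fin.sum_univ_three]
  rw [pd_add (by fun_prop) (by fun_prop), pd_add (by fun_prop) (by fun_prop),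
    pd_mul (hui 0) (hui 0), pd_mul (hui 1) (hui 1), pd_mul (hui 2) (hui 2)]
  ring

theorem dirDVec_self (hu : DifferentiableAt ℝ u p) :
    dirDVec u u p = grad3 (fun q => dot3 (u q) (u q) / 2) p - cross3 (u p) (curl3 u p) := by
  refine vec3_ext ?_ ?_ ?_ <;>
  · simp only [dirDVec, grad3, pd_dot3_self_half hu, cross3, curl3, Fin.sum_univ_three,
      Pi.sub_apply, Matrix.cons_val_zero, Matrix.cons_val_one, Matrix.cons_val]
    ring

theorem dot3_dirDVec_self (A : Pt → Vec3) (hu : DifferentiableAt ℝ u p) :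
    dot3 (u p) (dirDVec A u p) = dirD A (fun q => dot3 (u q) (u q) / 2) p := by
  simp only [dirD, pd_dot3_self_half hu]
  simp only [dot3, dirDVec, Finset.mul_sum]
  rw [Finset.sum_comm]
  exact Finset.sum_congr rfl fun i _ => Finset.sum_congr rfl fun j _ => by ring

theorem div3_smul {ρ : Pt → ℝ} (hρ : DifferentiableAt ℝ ρ p) (hu : DifferentiableAt ℝ u p) :
    div3 (fun q => ρ q • u q) p = dirD u ρ p + ρ p * div3 u p := by
  simp only [div3, dirD, Pi.smul_apply, smul_eq_mul, Finset.mul_sum, ← Finset.sum_add_distrib]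
  exact Finset.sum_congr rfl fun i _ => by rw [pd_mul hρ (by fun_prop)]; ring

theorem curl3_add {F G : Pt → Vec3} (hF : DifferentiableAt ℝ F p)
    (hG : DifferentiableAt ℝ G p) :
    curl3 (fun q => F q + G q) p = curl3 F p + curl3 G p := by
  refine vec3_ext ?_ ?_ ?_ <;>
  · simp (disch := fun_prop) only [curl3, Pi.add_apply, pd_add, Matrix.cons_val_zero,
      Matrix.cons_val_one, Matrix.cons_val]
    ring

theorem curl3_zero : curl3 (fun _ => 0) p = 0 := by
  refine vec3_ext ?_ ?_ ?_ <;> simp [curl3, pd_const]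

theorem curl3_grad3 {f : Pt → ℝ} (hf : ContDiff ℝ ∞ f) : curl3 (grad3 f) p = 0 := by
  refine vec3_ext ?_ ?_ ?_ <;>
    simp [curl3, grad3, pd_pd_comm hf 1 2, pd_pd_comm hf 2 0, pd_pd_comm hf 0 1]

theorem dtVec_curl3 (hu : ContDiff ℝ ∞ u) : dtVec (curl3 u) p = curl3 (dtVec u) p := by
  refine vec3_ext ?_ ?_ ?_ <;>
  · simp (disch := fun_prop) [dtVec, curl3, dt_sub, dt_pd_comm]

theorem curl3_dirDVec_self (hu : ContDiff ℝ ∞ u) :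
    curl3 (dirDVec u u) p
      = dirDVec u (curl3 u) p + div3 u p • curl3 u p - dirDVec (curl3 u) u p := by
  refine vec3_ext ?_ ?_ ?_ <;>
  · simp only [Pi.add_apply, Pi.sub_apply, Pi.smul_apply, smul_eq_mul, dirDVec, curl3, div3,
      Fin.sum_univ_three, Matrix.cons_val_zero, Matrix.cons_val_one, Matrix.cons_val_two,
      Matrix.head_cons, Matrix.tail_cons]
    -- `pd_pd_comm` is a permutation lemma: `simp` uses it to sort mixed second partials.
    simp (disch := fun_prop) only [pd_add, pd_sub, pd_mul, pd_pd_comm]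
    ring

end VectorCalculus

section Euler

variable {u : Pt → Vec3} {h ρ : Pt → ℝ} {p : Pt}

theorem materialDerivVec_self_of_crocco (hu : DifferentiableAt ℝ u p)
    (hh : DifferentiableAt ℝ h p)
    (hmom : dtVec u p - cross3 (u p) (curl3 u p)
      + grad3 (fun q => h q + dot3 (u q) (u q) / 2) p = 0) :
    materialDerivVec u u p = -grad3 h p := by
  rw [grad3_add hh (by unfold dot3; fun_prop)] at hmom
  rw [materialDerivVec, dirDVec_self hu]
  linear_combination hmom

theorem materialDeriv_of_continuity (hρ : DifferentiableAt ℝ ρ p) (hu : DifferentiableAt ℝ u p)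
    (hcont : dt ρ p + div3 (fun q => ρ q • u q) p = 0) :
    materialDeriv u ρ p = -(ρ p * div3 u p) := by
  rw [div3_smul hρ hu] at hcont
  rw [materialDeriv]
  linarith

theorem materialDerivVec_curl3 (hu : ContDiff ℝ ∞ u) (hh : ContDiff ℝ ∞ h)
    (hvel : ∀ q, materialDerivVec u u q = -grad3 h q) :
    materialDerivVec u (curl3 u) p = dirDVec (curl3 u) u p - div3 u p • curl3 u p := by
  have hsum : (fun q => dtVec u q + dirDVec u u q + grad3 h q) = fun _ => 0 :=
    funext fun q => by rw [← materialDerivVec, hvel, neg_add_cancel]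
  have hcurl : curl3 (dtVec u) p + curl3 (dirDVec u u) p = 0 := by
    have := congrArg (curl3 · p) hsum
    simp only [curl3_zero] at this
    rwa [curl3_add (by fun_prop) (by fun_prop), curl3_add (by fun_prop) (by fun_prop),
      curl3_grad3 hh, add_zero] at this
  rw [materialDerivVec, dtVec_curl3 hu, eq_neg_of_add_eq_zero_left hcurl, curl3_dirDVec_self hu]
  abel

end Euler

/-- with the barotropic Crocco momentum equation and mass
    continuity, the specific helicity obeys
    (∂/∂t + u·∇)((u·ω)/ρ) = −(ω/ρ)·∇(h − |u|²/2). -/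
theorem specific_helicity_evolution
    (u : Pt → Vec3) (h ρ : Pt → ℝ)
    (hu : SmoothV u) (hh : SmoothS h) (hρ : SmoothS ρ)
    (hρpos : ∀ p : Pt, 0 < ρ p)
    (hmom : ∀ p : Pt,
      dtVec u p - cross3 (u p) (curl3 u p)
        + grad3 (fun q => h q + dot3 (u q) (u q) / 2) p = 0)
    (hcont : ∀ p : Pt, dt ρ p + div3 (fun q => ρ q • u q) p = 0) :
    ∀ p : Pt,
      dt (fun q => dot3 (u q) (curl3 u q) / ρ q) p
        + dirD u (fun q => dot3 (u q) (curl3 u q) / ρ q) p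
        = - dot3 ((ρ p)⁻¹ • curl3 u p)
            (grad3 (fun q => h q - dot3 (u q) (u q) / 2) p) := by
  intro p
  have hu : ContDiff ℝ ∞ u := hu
  have hh : ContDiff ℝ ∞ h := hh
  have hρ : ContDiff ℝ ∞ ρ := hρ
  have hvel (q : Pt) : materialDerivVec u u q = -grad3 h q :=
    materialDerivVec_self_of_crocco (by fun_prop) (by fun_prop) (hmom q)
  have hhelicity : materialDeriv u (fun q => dot3 (u q) (curl3 u q)) p
      = -dot3 (curl3 u p) (grad3 h p) + dirD (curl3 u) (fun q => dot3 (u q) (u q) / 2) p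
        - div3 u p * dot3 (u p) (curl3 u p) := by
    rw [materialDeriv_dot3 (by fun_prop) (by fun_prop), hvel, materialDerivVec_curl3 hu hh hvel,
      ← dot3_dirDVec_self _ (by fun_prop)]
    simp only [dot3_eq_dotProduct, neg_dotProduct, dotProduct_sub, dotProduct_smul, smul_eq_mul,
      dotProduct_comm (grad3 h p)]
    ring
  change materialDeriv u _ p = _
  rw [materialDeriv_div (by unfold dot3; fun_prop) (by fun_prop) (hρpos p).ne', hhelicity,
    materialDeriv_of_continuity (by fun_prop) (by fun_prop) (hcont p),
    grad3_sub (by fun_prop) (by unfold dot3; fun_prop), dirD_eq_dot3_grad3]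
  simp only [dot3_eq_dotProduct, smul_dotProduct, dotProduct_sub, smul_eq_mul]
  field_simp
  ring
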